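/- The linear map M_J : ℝ^14 → ℝ^13 defined below has rank exactly 9, and its kernel is exactly the 5-dimensional subspace consisting of all vectors c^J_0(λ1,λ2,λ3,λ4,λ5) = (λ1−λ2+λ3−λ4, λ4−λ3, −λ4−λ2+λ3−2λ5, λ1−λ2, λ3, λ4+λ2−λ3+λ5, λ1−λ2+λ3, λ4, λ1−λ2+λ3, λ1, λ2, λ3, λ4, λ5) ∈ ℝ^14 with λ1, λ2, λ3, λ4, λ5 ∈ ℝ. -/

import Mathlib

noncomputable section

/-- The coefficient matrix `M_J` of the type-J divergence system:
rows are `d89,…,d101`, columns are `c96,…,c109`. -/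
def MJ : Matrix (Fin 13) (Fin 14) ℝ :=
  !![-1, 0, 0, 0, 0, 0, 1, -1, 0, 0, 0, 0, 0, 0;
    -1, 0, 0, 0, 0, -1, 0, 0, 0, 1, 0, 0, 0, 1;
    1, 0, 0, 0, 0, 0, 0, 0, -1, 0, 0, 0, 1, 0;
    0, 0, 0, 0, 0, 0, -1, 0, 1, 0, 0, 0, 0, 0;
    0, -1, 0, 0, -1, 0, 0, 0, 0, 0, 0, 0, 1, 0;
    0, 1, 0, 0, 0, -1, 0, 0, 0, 0, 1, 0, 0, 1;
    0, 1, 0, 0, 0, 0, 0, -1, 0, 0, 0, 1, 0, 0;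
    0, 0, 0, 0, 0, 0, 0, -1, 0, 0, 0, 0, 1, 0;
    0, 0, 0, -1, 0, 0, 0, 0, 1, 0, 0, -1, 0, 0;
    0, 0, 0, 1, 0, 0, 0, 0, 0, -1, 1, 0, 0, 0;
    0, 0, 0, 0, -1, 0, 0, 0, 0, 0, 0, 1, 0, 0;
    0, 0, 0, 1, 1, 0, -1, 0, 0, 0, 0, 0, 0, 0;
    0, 0, 1, 0, 0, 1, 0, 0, 0, 0, 0, 0, 0, 1]

/-- The kernel parametrization `c^J_0(λ1,…,λ5) ∈ ℝ^14`. -/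
def cJ0 (l1 l2 l3 l4 l5 : ℝ) : Fin 14 → ℝ :=
  ![l1 - l2 + l3 - l4,
    -l3 + l4,
    -l2 + l3 - l4 - 2 * l5,
    l1 - l2,
    l3,
    l2 - l3 + l4 + l5,
    l1 - l2 + l3,
    l4,
    l1 - l2 + l3,
    l1,
    l2,
    l3,
    l4,
    l5]

/-! The coordinates `c105, …, c109` of a kernel vector are free and determine the others by back
substitution, which yields the parametrization `cJ0`. Since `cJ0` reads `λ1, …, λ5` back off these
coordinates, it is injective, so the kernel has dimension 5 and rank–nullity gives rank `14 - 5`. -/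

open Matrix Module

theorem Matrix.rank_add_finrank_eq_of_range_eq_ker {K V m n : Type*} [Field K] [Fintype n]
    [AddCommGroup V] [Module K V] [FiniteDimensional K V] (A : Matrix m n K)
    {f : V →ₗ[K] n → K} (hf : Function.Injective f)
    (h : LinearMap.range f = LinearMap.ker A.mulVecLin) :
    A.rank + finrank K V = Fintype.card n := by
  rw [← LinearMap.finrank_range_of_inj hf, h, Matrix.rank,
    LinearMap.finrank_range_add_finrank_ker, finrank_fintype_fun_eq_card]

theorem MJ_mulVec_cJ0 (l1 l2 l3 l4 l5 : ℝ) : MJ *ᵥ cJ0 l1 l2 l3 l4 l5 = 0 := by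
  ext i
  fin_cases i <;> simp [MJ, cJ0, mulVec, dotProduct, Fin.sum_univ_succ] <;> ring

theorem eq_cJ0_of_MJ_mulVec_eq_zero {c : Fin 14 → ℝ} (h : MJ *ᵥ c = 0) :
    c = cJ0 (c 9) (c 10) (c 11) (c 12) (c 13) := by
  have rows : ∀ i, (MJ *ᵥ c) i = 0 := congrFun h
  simp only [mulVec, dotProduct, MJ, of_apply, cons_val', cons_val_fin_one, Fin.sum_univ_succ,
    Fin.isValue, cons_val_zero, cons_val_succ, Fin.succ_zero_eq_one, Fin.succ_one_eq_two,
    Fin.reduceSucc, Finset.univ_unique, Fin.default_eq_zero, Finset.sum_singleton,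
    Fin.forall_fin_succ, neg_mul, one_mul, zero_mul, add_zero, zero_add, forall_const] at rows
  ext i
  fin_cases i <;>
    simp only [Fin.zero_eta, Fin.mk_one, Fin.reduceFinMk, Fin.isValue, cJ0, cons_val_zero,
      cons_val_one, cons_val] <;>
    linarith

def cJ0Lin : (Fin 5 → ℝ) →ₗ[ℝ] Fin 14 → ℝ where
  toFun l := cJ0 (l 0) (l 1) (l 2) (l 3) (l 4)
  map_add' x y := by ext i; fin_cases i <;> simp [cJ0] <;> ring
  map_smul' a x := by ext i; fin_cases i <;> simp [cJ0] <;> ring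

theorem cJ0Lin_injective : Function.Injective cJ0Lin :=
  Function.LeftInverse.injective (g := fun c => ![c 9, c 10, c 11, c 12, c 13]) fun l => by
    ext i
    fin_cases i <;> rfl

theorem range_cJ0Lin : LinearMap.range cJ0Lin = LinearMap.ker MJ.mulVecLin := by
  ext c
  constructor
  · rintro ⟨l, rfl⟩
    exact MJ_mulVec_cJ0 _ _ _ _ _
  · intro h
    exact ⟨![c 9, c 10, c 11, c 12, c 13], (eq_cJ0_of_MJ_mulVec_eq_zero h).symm⟩

/-- `M_J` has rank exactly 9 and its kernel is exactly the set of
vectors `c^J_0(λ1,…,λ5)`. -/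
theorem MJ_rank_and_kernel :
    MJ.rank = 9 ∧
      (∀ c : Fin 14 → ℝ, MJ.mulVec c = 0 ↔ ∃ l1 l2 l3 l4 l5 : ℝ,
        c = cJ0 l1 l2 l3 l4 l5) := by
  refine ⟨?_, fun c => ⟨fun h => ⟨_, _, _, _, _, eq_cJ0_of_MJ_mulVec_eq_zero h⟩, ?_⟩⟩
  · have rank_nullity := MJ.rank_add_finrank_eq_of_range_eq_ker cJ0Lin_injective range_cJ0Lin
    simp only [finrank_fin_fun, Fintype.card_fin] at rank_nullity
    omega
  · rintro ⟨l1, l2, l3, l4, l5, rfl⟩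
    exact MJ_mulVec_cJ0 l1 l2 l3 l4 l5
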